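/- Let H : ℂⁿ → ℂⁿ be a polynomial map and let M(α₁,...,α_s) := ∑_{i=1}^s (JH)(α_i). Suppose for some m ≥ d, the sum of all principal d×d minors of M(α₁,...,α_m) is zero for all α₁, ..., α_m ∈ ℂⁿ. Then for all s ∈ ℕ, all b₁, ..., b_s ∈ ℂ, and all α₁, ..., α_s ∈ ℂⁿ, the sum of all principal d×d minors of ∑_{i=1}^s b_i · (JH)(α_i) is also zero. -/

import Mathlib

/-!
For fixed points `α i`, the map `x ↦ principalMinorSum d (∑ i, x i • JH (α i))` is a homogeneous
polynomial of degree `d` in `x`. Applying the hypothesis to the points `α i` repeated `k i` times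
shows that it vanishes at every `k ∈ ℕˢ` with `∑ k i = m`. Composed with the projection onto the
hyperplane `∑ x i = m` along a coordinate axis, it becomes a polynomial of degree `≤ d` vanishing at
the lattice points of the simplex `∑ k i ≤ d`, and such a polynomial is zero: its finite differences
have smaller degree and vanish on a smaller simplex. So the form vanishes on the hyperplane, by
homogeneity off the hyperplane `∑ x i = 0`, and hence everywhere.
-/

open MvPolynomial

/-- The Jacobian matrix of a polynomial map `F : ℂⁿ → ℂᵐ`, evaluated at `α`. -/
noncomputable def jacEval {n m : ℕ} (F : Fin m → MvPolynomial (Fin n) ℂ)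
    (α : Fin n → ℂ) : Matrix (Fin m) (Fin n) ℂ :=
  Matrix.of fun i j => eval α (pderiv j (F i))

/-- The sum of all principal minors of size `d` of an `n × n` matrix. -/
noncomputable def principalMinorSum {n : ℕ} (d : ℕ) (A : Matrix (Fin n) (Fin n) ℂ) : ℂ :=
  ∑ s ∈ Finset.univ.powersetCard d,
    Matrix.det (Matrix.of fun i j : (s : Finset (Fin n)) => A i j)

theorem apply_eq_apply_zero_of_forall_add_single_one {σ α : Type*} [Fintype σ] [DecidableEq σ]
    {g : (σ → ℕ) → α} (hg : ∀ k i, g (k + Pi.single i 1) = g k) (k : σ → ℕ) : g k = g 0 := by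
  have hsingle : ∀ i n k, g (k + Pi.single i n) = g k := by
    intro i n
    induction n with
    | zero => simp
    | succ n ih => intro k; rw [Pi.single_add, ← add_assoc, hg, ih]
  have := Finset.sum_induction (s := Finset.univ) (fun i => Pi.single i (k i))
    (fun a => ∀ l, g (l + a) = g l) (fun a b ha hb l => by rw [← add_assoc, hb, ha]) (by simp)
    (fun i _ => hsingle i (k i))
  simpa only [zero_add, Finset.univ_sum_single] using this 0

theorem exists_sum_comp_eq_sum_nsmul {ι M : Type*} [Fintype ι] [AddCommMonoid M] (B : ι → M)
    (k : ι → ℕ) {m : ℕ} (hk : ∑ i, k i = m) : ∃ τ : Fin m → ι, ∑ j, B (τ j) = ∑ i, k i • B i := by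
  have hcard : Fintype.card (Σ i, Fin (k i)) = m := by simp [hk]
  let e := Fintype.equivFinOfCardEq hcard
  refine ⟨fun j => (e.symm j).1, ?_⟩
  rw [e.symm.sum_comp (fun p => B p.1), ← Finset.univ_sigma_univ, Finset.sum_sigma]
  simp only [Finset.sum_const, Finset.card_univ, Fintype.card_fin]

namespace MvPolynomial

variable {σ R : Type*}

theorem eval_bind₁ [CommSemiring R] (x : σ → R) (g : σ → MvPolynomial σ R)
    (p : MvPolynomial σ R) : eval x (bind₁ g p) = eval (fun i => eval x (g i)) p :=
  eval₂Hom_bind₁ _ _ _ _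

theorem totalDegree_bind₁_le [CommSemiring R] {g : σ → MvPolynomial σ R} {e : ℕ}
    (hg : ∀ i, (g i).totalDegree ≤ e) (p : MvPolynomial σ R) :
    (bind₁ g p).totalDegree ≤ e * p.totalDegree := by
  conv_lhs => rw [← support_sum_monomial_coeff p]
  rw [map_sum]
  refine totalDegree_finsetSum_le fun v hv => ?_
  rw [bind₁_monomial]
  calc (C (coeff v p) * ∏ i ∈ v.support, g i ^ v i).totalDegree
      ≤ 0 + ∑ i ∈ v.support, v i * e := by
        refine (totalDegree_mul _ _).trans (add_le_add (totalDegree_C _).le ?_)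
        refine (totalDegree_finsetProd _ _).trans (Finset.sum_le_sum fun i _ => ?_)
        exact (totalDegree_pow _ _).trans (Nat.mul_le_mul_left _ (hg i))
    _ = e * v.sum fun _ k => k := by rw [zero_add, ← Finset.sum_mul, mul_comm]; rfl
    _ ≤ e * p.totalDegree := Nat.mul_le_mul_left _ (le_totalDegree hv)

noncomputable def translate [CommSemiring R] (c : σ → R) :
    MvPolynomial σ R →ₐ[R] MvPolynomial σ R :=
  bind₁ fun i => X i + C (c i)

theorem eval_translate [CommSemiring R] (c x : σ → R) (p : MvPolynomial σ R) :
    eval x (translate c p) = eval (x + c) p := by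
  rw [translate, eval_bind₁]
  congr 2
  funext i
  simp

theorem totalDegree_translate_le [CommSemiring R] (c : σ → R) (p : MvPolynomial σ R) :
    (translate c p).totalDegree ≤ p.totalDegree := by
  refine (totalDegree_bind₁_le (fun i => ?_) p).trans (one_mul _).le
  refine (totalDegree_add _ _).trans (max_le ((totalDegree_monomial_le _ _).trans ?_)
    ((totalDegree_C _).trans_le zero_le_one))
  simp

theorem totalDegree_translate_monomial_sub_lt_or_eq [CommRing R] [IsDomain R] (c : σ → R)
    (v : σ →₀ ℕ) (a : R) :
    (translate c (monomial v a) - monomial v a).totalDegree < (monomial v a).totalDegree ∨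
      translate c (monomial v a) = monomial v a := by
  refine induction_on_monomial (motive := fun q =>
    (translate c q - q).totalDegree < q.totalDegree ∨ translate c q = q) (fun a => ?_) ?_ v a
  · simp [translate]
  intro q i ih
  rcases eq_or_ne q 0 with rfl | hq
  · simp
  left
  have hdeg : (q * X i).totalDegree = q.totalDegree + 1 := by
    rw [totalDegree_mul_of_isDomain hq (X_ne_zero i), totalDegree_X]
  have hdiff : translate c (q * X i) - q * X i
      = (translate c q - q) * X i + translate c q * C (c i) := by
    simp only [map_mul, translate, bind₁_X_right]
    ring
  rw [hdeg, hdiff, Nat.lt_succ_iff]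
  refine (totalDegree_add _ _).trans (max_le ?_ ?_)
  · rcases ih with ih | ih
    · exact (totalDegree_mul _ _).trans (by rw [totalDegree_X]; omega)
    · simp [ih]
  · exact (totalDegree_mul _ _).trans (by rw [totalDegree_C]; exact totalDegree_translate_le c q)

theorem totalDegree_translate_sub_le [CommRing R] [IsDomain R] (c : σ → R)
    {p : MvPolynomial σ R} {D : ℕ} (hp : p.totalDegree ≤ D + 1) :
    (translate c p - p).totalDegree ≤ D := by
  conv_lhs => rw [← support_sum_monomial_coeff p]
  rw [map_sum, ← Finset.sum_sub_distrib]
  refine totalDegree_finsetSum_le fun v hv => ?_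
  have hv' : (monomial v (coeff v p)).totalDegree ≤ D + 1 :=
    (totalDegree_monomial_le _ _).trans ((le_totalDegree hv).trans hp)
  rcases totalDegree_translate_monomial_sub_lt_or_eq c v (coeff v p) with h | h
  · omega
  · simp [h]

theorem eq_zero_of_eval_natCast_eq_zero_of_sum_le [CommRing R] [IsDomain R] [CharZero R]
    [Fintype σ] {D : ℕ} {p : MvPolynomial σ R} (hp : p.totalDegree ≤ D)
    (h : ∀ k : σ → ℕ, ∑ i, k i ≤ D → eval (fun i => (k i : R)) p = 0) : p = 0 := by
  classical
  induction D generalizing p with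
  | zero =>
    rw [totalDegree_eq_zero_iff_eq_C.mp (Nat.le_zero.mp hp)] at h ⊢
    simpa using h 0 (by simp)
  | succ D ih =>
    have hcast : ∀ (k : σ → ℕ) i, (fun j => ((k + Pi.single i 1 : σ → ℕ) j : R))
        = (fun j => (k j : R)) + Pi.single i 1 := by
      intro k i
      funext j
      simp [Pi.single_apply, apply_ite]
    have hshift : ∀ (k : σ → ℕ) i, eval (fun j => ((k + Pi.single i 1 : σ → ℕ) j : R)) p
        = eval (fun j => (k j : R)) p := by
      intro k i
      have hdiff := ih (totalDegree_translate_sub_le (Pi.single i 1) hp) fun l hl => by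
        rw [map_sub, eval_translate, ← hcast, h l (by omega),
          h _ (by simpa [Finset.sum_add_distrib] using hl), sub_zero]
      rw [hcast, ← eval_translate, ← sub_eq_zero, ← map_sub, hdiff, map_zero]
    refine funext_set (fun _ => Set.range Nat.cast)
      (fun _ => Set.infinite_range_of_injective Nat.cast_injective) fun x hx => ?_
    choose k hk using fun i => hx i trivial
    have hx : x = fun i => (k i : R) := by funext i; exact (hk i).symm
    rw [hx, map_zero, apply_eq_apply_zero_of_forall_add_single_one
      (g := fun k : σ → ℕ => eval (fun i => (k i : R)) p) hshift k]
    simpa using h 0 (by simp)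

theorem eval_eq_zero_of_sum_eq [CommRing R] [IsDomain R] [CharZero R] [Fintype σ] [Nonempty σ]
    {f : MvPolynomial σ R} {d m : ℕ} (hf : f.totalDegree ≤ d) (hdm : d ≤ m)
    (h : ∀ k : σ → ℕ, ∑ i, k i = m → eval (fun i => (k i : R)) f = 0)
    {x : σ → R} (hx : ∑ i, x i = m) : eval x f = 0 := by
  classical
  obtain ⟨i₀⟩ := ‹Nonempty σ›
  set p := bind₁ (fun j => X j + (Pi.single i₀ (C (m : R) - ∑ l, X l) : σ → MvPolynomial σ R) j) f
    with hp_def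
  have eval_p : ∀ y : σ → R, eval y p = eval (y + Pi.single i₀ ((m : R) - ∑ l, y l)) f := by
    intro y
    rw [hp_def, eval_bind₁]
    congr 2
    funext j
    rcases eq_or_ne j i₀ with rfl | hj <;> simp [*]
  have hp : p = 0 := by
    refine eq_zero_of_eval_natCast_eq_zero_of_sum_le (D := d) ?_ fun k hk => ?_
    · refine (totalDegree_bind₁_le (e := 1) (fun j => ?_) f).trans (by rwa [one_mul])
      refine (totalDegree_add _ _).trans (max_le (totalDegree_X j).le ?_)
      rw [Pi.single_apply]
      split_ifs
      · refine (totalDegree_sub _ _).trans (max_le ((totalDegree_C _).trans_le zero_le_one) ?_)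
        exact totalDegree_finsetSum_le fun l _ => (totalDegree_X l).le
      · simp
    · have hlift : (fun i => (k i : R)) + Pi.single i₀ ((m : R) - ∑ l, (k l : R))
          = fun i => ((k + Pi.single i₀ (m - ∑ l, k l) : σ → ℕ) i : R) := by
        funext j
        rcases eq_or_ne j i₀ with rfl | hj
        · simp [Nat.cast_sub (hk.trans hdm)]
        · simp [hj]
      rw [eval_p, hlift]
      refine h _ ?_
      simp only [Pi.add_apply, Finset.sum_add_distrib, Finset.sum_pi_single', Finset.mem_univ,
        if_true]
      omega
  have := eval_p x
  rwa [hp, hx, sub_self, Pi.single_zero, add_zero, map_zero, eq_comm] at this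

theorem IsHomogeneous.eval_smul [CommSemiring R] [Fintype σ] {f : MvPolynomial σ R} {d : ℕ}
    (hf : f.IsHomogeneous d) (c : R) (x : σ → R) : eval (c • x) f = c ^ d * eval x f := by
  simp only [eval_eq', Finset.mul_sum]
  refine Finset.sum_congr rfl fun v hv => ?_
  rw [← hf (mem_support_iff.mp hv), Finsupp.weight_apply, Finsupp.sum_fintype _ _ (by simp)]
  simp only [Pi.smul_apply, smul_eq_mul, mul_pow, Finset.prod_mul_distrib,
    Finset.prod_pow_eq_pow_sum, Pi.one_apply, mul_one]
  ring

theorem IsHomogeneous.eq_zero_of_eval_natCast_eq_zero {K : Type*} [Field K] [CharZero K]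
    [Fintype σ] {f : MvPolynomial σ K} {d m : ℕ} (hf : f.IsHomogeneous d) (hd : 0 < d)
    (hdm : d ≤ m) (h : ∀ k : σ → ℕ, ∑ i, k i = m → eval (fun i => (k i : K)) f = 0) :
    f = 0 := by
  rcases isEmpty_or_nonempty σ with hσ | hσ
  · by_contra hf0
    exact hd.ne ((isHomogeneous_of_isEmpty σ K f).inj_right hf hf0)
  have hm : (m : K) ≠ 0 := by exact_mod_cast (hd.trans_le hdm).ne'
  have eval_eq_zero : ∀ x : σ → K, ∑ i, x i ≠ 0 → eval x f = 0 := by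
    intro x hx
    have hc : (m : K) / ∑ i, x i ≠ 0 := div_ne_zero hm hx
    have := eval_eq_zero_of_sum_eq hf.totalDegree_le hdm h (x := ((m : K) / ∑ i, x i) • x)
      (by simp [← Finset.mul_sum, hx])
    rw [hf.eval_smul] at this
    exact (mul_eq_zero.mp this).resolve_left (pow_ne_zero _ hc)
  have hsum : (∑ i, X i : MvPolynomial σ K) ≠ 0 := fun h0 => by
    simpa using congrArg (eval 1) h0
  refine (mul_eq_zero.mp (MvPolynomial.funext fun x => ?_ : f * ∑ i, X i = 0)).resolve_right hsum
  by_cases hx : ∑ i, x i = 0 <;> simp [hx, eval_eq_zero]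

theorem isHomogeneous_det {ι : Type*} [Fintype ι] [DecidableEq ι] [CommRing R]
    (M : Matrix ι ι (MvPolynomial σ R)) (hM : ∀ i j, (M i j).IsHomogeneous 1) :
    M.det.IsHomogeneous (Fintype.card ι) := by
  rw [Matrix.det_apply']
  refine IsHomogeneous.sum _ _ _ fun e _ => ?_
  have hprod := IsHomogeneous.prod Finset.univ (fun i => M (e i) i) (fun _ => 1) fun i _ => hM _ _
  have hsign : ((Equiv.Perm.sign e : ℤ) : MvPolynomial σ R).IsHomogeneous 0 := by
    rw [← map_intCast (C : R →+* MvPolynomial σ R)]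
    exact isHomogeneous_C _ _
  simpa using hsign.mul hprod

end MvPolynomial

theorem principalMinorSum_zero {n : ℕ} (A : Matrix (Fin n) (Fin n) ℂ) :
    principalMinorSum 0 A = 1 := by
  simp [principalMinorSum, Finset.powersetCard_zero]

noncomputable def principalMinorSumPoly {ι : Type*} [Fintype ι] {n : ℕ} (d : ℕ)
    (A : ι → Matrix (Fin n) (Fin n) ℂ) : MvPolynomial ι ℂ :=
  ∑ s ∈ Finset.univ.powersetCard d,
    Matrix.det (Matrix.of fun i j : (s : Finset (Fin n)) => ∑ r, C (A r i j) * X r)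

theorem eval_principalMinorSumPoly {ι : Type*} [Fintype ι] {n : ℕ} (d : ℕ)
    (A : ι → Matrix (Fin n) (Fin n) ℂ) (x : ι → ℂ) :
    eval x (principalMinorSumPoly d A) = principalMinorSum d (∑ r, x r • A r) := by
  simp only [principalMinorSumPoly, principalMinorSum, map_sum, RingHom.map_det]
  congr! with s
  ext i j
  simp [Matrix.sum_apply, mul_comm]

theorem isHomogeneous_principalMinorSumPoly {ι : Type*} [Fintype ι] {n : ℕ} (d : ℕ)
    (A : ι → Matrix (Fin n) (Fin n) ℂ) : (principalMinorSumPoly d A).IsHomogeneous d := by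
  refine IsHomogeneous.sum _ _ _ fun s hs => ?_
  rw [← (Finset.mem_powersetCard.mp hs).2, ← Fintype.card_coe]
  refine isHomogeneous_det _ fun i j => IsHomogeneous.sum _ _ _ fun r _ => ?_
  simpa using (isHomogeneous_C ι (A r i j)).mul (isHomogeneous_X ℂ r)

theorem stmt_16 (n d m : ℕ) (hmd : m ≥ d) (H : Fin n → MvPolynomial (Fin n) ℂ)
    (h : ∀ α : Fin m → Fin n → ℂ, principalMinorSum d (∑ i, jacEval H (α i)) = 0) :
    ∀ (s : ℕ) (b : Fin s → ℂ) (α : Fin s → Fin n → ℂ),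
      principalMinorSum d (∑ i, b i • jacEval H (α i)) = 0 := by
  intro s b α
  have hd : 0 < d := by
    refine Nat.pos_of_ne_zero fun hd0 => ?_
    simpa [hd0, principalMinorSum_zero] using h fun _ _ => 0
  have hpoly : principalMinorSumPoly d (fun i => jacEval H (α i)) = 0 := by
    refine (isHomogeneous_principalMinorSumPoly d _).eq_zero_of_eval_natCast_eq_zero hd hmd
      fun k hk => ?_
    obtain ⟨τ, hτ⟩ := exists_sum_comp_eq_sum_nsmul (fun i => jacEval H (α i)) k hk
    simpa only [eval_principalMinorSumPoly, Nat.cast_smul_eq_nsmul, ← hτ] using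
      h fun j => α (τ j)
  rw [← eval_principalMinorSumPoly, hpoly, map_zero]
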